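/- The generalized double-semion plaquette operator is a self-adjoint involution (first two relations of Eq. (16), local form): for every local configuration n ∈ {0,1}^12 one has b(n̄) = conj(b(n)) and b(n̄) · b(n) = 1. Consequently, the operator B_p on the space of functions ({0,1}^12 → ℂ) defined by (B_p ψ)(n) = b(n̄) · ψ(n̄) satisfies B_p ∘ B_p = id and B_p is self-adjoint with respect to the standard inner product. -/

import Mathlib

/-- The integer occupation number of edge `j` (edges are numbered `1, …, 12` in the paper;
here `j : Fin 12` denotes edge `j+1`). -/
def occ (n : Fin 12 → ZMod 2) (j : Fin 12) : ℤ := ((n j).val : ℤ)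

/-- The integer exponent `E(n)` of Eqs. (10)–(12): interior edges `1,…,6` are indices
`0,…,5`, outer legs `7,…,12` are indices `6,…,11`. -/
def Eexp (n : Fin 12 → ZMod 2) : ℤ :=
  occ n 11 * (occ n 0 * occ n 5 - (1 - occ n 0) * (1 - occ n 5)) +
  occ n 6 * ((1 - occ n 0) * (1 - occ n 1) - occ n 0 * occ n 1) +
  (1 - occ n 7) * (occ n 1 * (1 - occ n 2) - (1 - occ n 1) * occ n 2) +
  occ n 8 * (occ n 2 * occ n 3 - (1 - occ n 2) * (1 - occ n 3)) +
  occ n 9 * ((1 - occ n 3) * (1 - occ n 4) - occ n 3 * occ n 4) +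
  (1 - occ n 10) * (occ n 4 * (1 - occ n 5) - (1 - occ n 4) * occ n 5)

/-- The exponent `Σ_{j=1}^{6} n_{j−1}(1−n_j)` (with `n₀ := n₆`) of the `(−1)` factor. -/
def signExp (n : Fin 12 → ZMod 2) : ℤ :=
  occ n 5 * (1 - occ n 0) + occ n 0 * (1 - occ n 1) + occ n 1 * (1 - occ n 2) +
  occ n 2 * (1 - occ n 3) + occ n 3 * (1 - occ n 4) + occ n 4 * (1 - occ n 5)

/-- The generalized plaquette phase `b(n) = (−1)^{Σ n_{j−1}(1−n_j)} · i^{E(n)}`. -/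
noncomputable def plaqPhase (n : Fin 12 → ZMod 2) : ℂ :=
  (-1 : ℂ) ^ (signExp n) * Complex.I ^ (Eexp n)

/-- `n̄`: flip the six interior entries, leave the outer legs unchanged. -/
def flipInterior (n : Fin 12 → ZMod 2) : Fin 12 → ZMod 2 :=
  fun j => if (j : ℕ) < 6 then n j + 1 else n j

/-- The generalized plaquette operator `(B_p ψ)(n) = b(n̄) · ψ(n̄)`. -/
noncomputable def plaqOp :
    EuclideanSpace ℂ (Fin 12 → ZMod 2) →ₗ[ℂ] EuclideanSpace ℂ (Fin 12 → ZMod 2) where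
  toFun ψ := WithLp.toLp 2 (fun n => plaqPhase (flipInterior n) * ψ (flipInterior n))
  map_add' ψ φ := by
    refine PiLp.ext fun c => ?_
    simp [mul_add]
  map_smul' a ψ := by
    refine PiLp.ext fun c => ?_
    simp [mul_comm, mul_left_comm, mul_assoc]

/-!
Flipping the interior edges leaves the sign exponent `Σ n_{j-1}(1 - n_j)` unchanged (the
difference telescopes around the hexagon) and negates `E(n)`, each of whose six terms is odd under
`n_j ↦ 1 - n_j`. Hence `b(n̄) = (-1)^s i^{-E} = conj b(n)` and `b(n̄) b(n) = 1`. The operator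
`ψ ↦ w · (ψ ∘ σ)` with `σ` an involution is then an involution when `w · (w ∘ σ) = 1`, and
self-adjoint when `w ∘ σ = conj w`, by reindexing the inner product along `σ`.
-/

section WeightedComp

variable {𝕜 ι : Type*} [RCLike 𝕜]

noncomputable def weightedComp (σ : ι → ι) (w : ι → 𝕜) :
    EuclideanSpace 𝕜 ι →ₗ[𝕜] EuclideanSpace 𝕜 ι where
  toFun ψ := WithLp.toLp 2 fun i => w i * ψ (σ i)
  map_add' ψ φ := PiLp.ext fun i => by simp [mul_add]
  map_smul' a ψ := PiLp.ext fun i => by simp [mul_left_comm]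

@[simp]
theorem weightedComp_apply (σ : ι → ι) (w : ι → 𝕜) (ψ : EuclideanSpace 𝕜 ι) (i : ι) :
    weightedComp σ w ψ i = w i * ψ (σ i) := rfl

theorem weightedComp_comp_self {σ : ι → ι} (hσ : Function.Involutive σ) {w : ι → 𝕜}
    (hw : ∀ i, w i * w (σ i) = 1) : weightedComp σ w ∘ₗ weightedComp σ w = LinearMap.id :=
  LinearMap.ext fun ψ => PiLp.ext fun i => by
    simp [hσ i, ← mul_assoc, hw i]

theorem adjoint_weightedComp [Fintype ι] {σ : ι → ι} (hσ : Function.Involutive σ) {w : ι → 𝕜}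
    (hw : ∀ i, w (σ i) = starRingEnd 𝕜 (w i)) :
    LinearMap.adjoint (weightedComp σ w) = weightedComp σ w := by
  refine ((LinearMap.eq_adjoint_iff _ _).2 fun ψ φ => ?_).symm
  simp only [PiLp.inner_apply, weightedComp_apply, RCLike.inner_apply]
  refine Fintype.sum_equiv (hσ.toPerm σ) _ _ fun i => ?_
  simp only [Function.Involutive.coe_toPerm, hσ i, map_mul, hw i]
  ring

end WeightedComp

theorem flipInterior_involutive : Function.Involutive flipInterior := by
  intro n
  funext j
  by_cases hj : (j : ℕ) < 6 <;> simp [flipInterior, hj, add_assoc, CharTwo.add_self_eq_zero]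

theorem occ_flipInterior (n : Fin 12 → ZMod 2) (j : Fin 12) :
    occ (flipInterior n) j = if (j : ℕ) < 6 then 1 - occ n j else occ n j := by
  unfold occ flipInterior
  split
  · generalize n j = a
    revert a
    decide
  · rfl

theorem signExp_flipInterior (n : Fin 12 → ZMod 2) :
    signExp (flipInterior n) = signExp n := by
  simp only [signExp, occ_flipInterior, Fin.coe_ofNat_eq_mod, Nat.reduceMod, Nat.reduceLT,
    ↓reduceIte]
  ring

theorem Eexp_flipInterior (n : Fin 12 → ZMod 2) : Eexp (flipInterior n) = -Eexp n := by
  simp only [Eexp, occ_flipInterior, Fin.coe_ofNat_eq_mod, Nat.reduceMod, Nat.reduceLT,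
    ↓reduceIte]
  ring

theorem plaqPhase_flipInterior (n : Fin 12 → ZMod 2) :
    plaqPhase (flipInterior n) = starRingEnd ℂ (plaqPhase n) := by
  rw [plaqPhase, plaqPhase, signExp_flipInterior, Eexp_flipInterior, map_mul, map_zpow₀,
    map_zpow₀, Complex.conj_I, map_neg, map_one, zpow_neg, ← inv_zpow, Complex.inv_I]

theorem plaqPhase_flipInterior_mul_self (n : Fin 12 → ZMod 2) :
    plaqPhase (flipInterior n) * plaqPhase n = 1 := by
  rw [plaqPhase, plaqPhase, signExp_flipInterior, Eexp_flipInterior, zpow_neg,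
    mul_mul_mul_comm, ← mul_zpow, inv_mul_cancel₀ (zpow_ne_zero _ Complex.I_ne_zero)]
  norm_num

theorem plaqOp_eq_weightedComp :
    plaqOp = weightedComp flipInterior (plaqPhase ∘ flipInterior) := rfl

/-- The generalized double-semion plaquette operator is a self-adjoint involution
(first two relations of Eq. (16), local form): `b(n̄) = conj (b n)` and `b(n̄)·b(n) = 1`
for every local configuration `n`, and consequently `B_p ∘ B_p = id` and `B_p` is
self-adjoint with respect to the standard inner product. -/
theorem plaqOp_selfAdjoint_involution :
    (∀ n : Fin 12 → ZMod 2, plaqPhase (flipInterior n) = starRingEnd ℂ (plaqPhase n)) ∧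
    (∀ n : Fin 12 → ZMod 2, plaqPhase (flipInterior n) * plaqPhase n = 1) ∧
    plaqOp ∘ₗ plaqOp = LinearMap.id ∧
    LinearMap.adjoint plaqOp = plaqOp := by
  refine ⟨plaqPhase_flipInterior, plaqPhase_flipInterior_mul_self, ?_, ?_⟩ <;>
    rw [plaqOp_eq_weightedComp]
  · refine weightedComp_comp_self flipInterior_involutive fun n => ?_
    simpa [flipInterior_involutive n] using plaqPhase_flipInterior_mul_self n
  · refine adjoint_weightedComp flipInterior_involutive fun n => ?_
    simp [flipInterior_involutive n, plaqPhase_flipInterior]
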